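/- Let K=K(c) be a symmetric A_{2n-1}-crystal with symmetric extract B, and let i,j be colors with i,j<n and |i-j|=1. Then every connected component of the 2-colored graph (S, E_{ibar} disjoint-union E_{jbar}) is an A_2-crystal, i.e. it satisfies axioms (A1)-(A4) with the two colors ibar and jbar regarded as neighboring. -/

import Mathlib

open Classical

noncomputable section

/-- Iterate a partial operator `k` times. -/
def optIter {V : Type} (f : V → Option V) : ℕ → V → Option V
  | 0, v => some v
  | k + 1, v => (f v).bind (optIter f k)

/-- A vertex type together with, for every natural number (color) `i`,
a partial operator whose graph is the set of `i`-edges. -/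
structure PreGraph where
  V : Type
  F : ℕ → V → Option V

namespace PreGraph

/-- Partial inverse operator of color `i`. -/
def Finv (K : PreGraph) (i : ℕ) (v : K.V) : Option K.V :=
  if h : ∃ u, K.F i u = some v then some h.choose else none

/-- Number of edges of the maximal `i`-colored path beginning at `v`. -/
def h (K : PreGraph) (i : ℕ) (v : K.V) : ℕ :=
  sSup {k | (optIter (K.F i) k v).isSome = true}

/-- Number of edges of the maximal `i`-colored path ending at `v`. -/
def t (K : PreGraph) (i : ℕ) (v : K.V) : ℕ :=
  sSup {k | ∃ u, optIter (K.F i) k u = some v}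

/-- One (undirected) step along an edge of any color. -/
def Step (K : PreGraph) (u v : K.V) : Prop :=
  ∃ i, K.F i u = some v ∨ K.F i v = some u

/-- Weak connectivity. -/
def Connected (K : PreGraph) : Prop :=
  ∀ u v : K.V, Relation.ReflTransGen K.Step u v

/-- All edges have colors in `C`. -/
def ColorsIn (K : PreGraph) (C : Set ℕ) : Prop :=
  ∀ i ∉ C, ∀ v, K.F i v = none

end PreGraph

/-- `s` has no incoming edges. -/
def IsSource (K : PreGraph) (s : K.V) : Prop := ∀ i u, K.F i u ≠ some s

/-- `tv` has no outgoing edges. -/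
def IsSink (K : PreGraph) (tv : K.V) : Prop := ∀ i, K.F i tv = none

/-- `K` is a (finite) colored graph with colors in `C` satisfying axiom (A1):
every connected monochromatic subgraph is a finite directed path. -/
def IsColored (K : PreGraph) (C : Set ℕ) : Prop :=
  Finite K.V ∧ K.ColorsIn C ∧
  (∀ (i : ℕ) (u u' v : K.V), K.F i u = some v → K.F i u' = some v → u = u') ∧
  (∀ (i : ℕ) (v : K.V) (k : ℕ), 0 < k → optIter (K.F i) k v ≠ some v)

/-- `|i - j| = 1`. -/
def Neighb (i j : ℕ) : Prop := i + 1 = j ∨ j + 1 = i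

/-- `|i - j| ≥ 2`. -/
def Far (i j : ℕ) : Prop := i + 2 ≤ j ∨ j + 2 ≤ i

instance (i j : ℕ) : Decidable (Neighb i j) := by unfold Neighb; infer_instance
instance (i j : ℕ) : Decidable (Far i j) := by unfold Far; infer_instance

/-- Axiom (A2) for the ordered pair of distinct colors `(i, j)`. -/
def A2at (K : PreGraph) (i j : ℕ) : Prop :=
  (∀ u v, K.F i u = some v →
    K.t j v ≤ K.t j u ∧ K.h j u ≤ K.h j v ∧
    ((K.h j u : ℤ) - (K.t j u : ℤ)) - ((K.h j v : ℤ) - (K.t j v : ℤ)) =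
      (if Neighb i j then (-1 : ℤ) else 0)) ∧
  (∀ u v w, K.F i u = some v → K.F i v = some w →
    2 * K.h j v ≤ K.h j u + K.h j w)

/-- Axiom (A3) for neighboring colors `i, j`. -/
def A3at (K : PreGraph) (i j : ℕ) : Prop :=
  (∀ u v v', K.F i u = some v → K.F j u = some v' →
    K.h j v = K.h j u →
    ((K.h i v' : ℤ) - (K.h i u : ℤ) = 1 ∧ ∃ w, K.F j v = some w ∧ K.F i v' = some w)) ∧
  (∀ u u' v, K.F i u = some v → K.F j u' = some v →
    (K.h j v : ℤ) - (K.h j u : ℤ) = 1 →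
    (K.h i v = K.h i u' ∧ ∃ w, K.F j w = some u ∧ K.F i w = some u'))

/-- Axiom (A4) (Verma relations) for neighboring colors `i, j`. -/
def A4at (K : PreGraph) (i j : ℕ) : Prop :=
  (∀ u v v', K.F i u = some v → K.F j u = some v' →
    (K.h j v : ℤ) - (K.h j u : ℤ) = 1 → (K.h i v' : ℤ) - (K.h i u : ℤ) = 1 →
    ∃ w, (((K.F i u).bind (K.F j)).bind (K.F j)).bind (K.F i) = some w ∧
         (((K.F j u).bind (K.F i)).bind (K.F i)).bind (K.F j) = some w) ∧
  (∀ u u' v, K.F i u = some v → K.F j u' = some v →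
    K.h j v = K.h j u → K.h i v = K.h i u' →
    ∃ w, (((K.Finv i v).bind (K.Finv j)).bind (K.Finv j)).bind (K.Finv i) = some w ∧
         (((K.Finv j v).bind (K.Finv i)).bind (K.Finv i)).bind (K.Finv j) = some w)

/-- Axiom (A5) for colors `i, j` at distance at least 2. -/
def A5at (K : PreGraph) (i j : ℕ) : Prop :=
  ∀ Fi ∈ ({K.F i, K.Finv i} : Set (K.V → Option K.V)),
  ∀ Fj ∈ ({K.F j, K.Finv j} : Set (K.V → Option K.V)),
  ∀ v, (Fi v).isSome → (Fj v).isSome →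
    ∃ w, (Fi v).bind Fj = some w ∧ (Fj v).bind Fi = some w

/-- `K` is a regular crystal of type A on the color set `C`
(an `A_{|C|}`-crystal when `C` is an integer interval). -/
def IsCrystalOn (K : PreGraph) (C : Set ℕ) : Prop :=
  IsColored K C ∧ K.Connected ∧
  (∀ i ∈ C, ∀ j ∈ C, i ≠ j → A2at K i j) ∧
  (∀ i ∈ C, ∀ j ∈ C, Neighb i j → A3at K i j ∧ A4at K i j) ∧
  (∀ i ∈ C, ∀ j ∈ C, Far i j → A5at K i j)

/-- `K` is an `A_n`-crystal (colors `1, …, n`). -/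
def IsACrystal (n : ℕ) (K : PreGraph) : Prop := IsCrystalOn K (Set.Icc 1 n)

/-- Apply a list of operators, head first. -/
def applyStr (K : PreGraph) : List ℕ → K.V → Option K.V
  | [], v => some v
  | i :: L, v => (K.F i v).bind (applyStr K L)

/-- The string `w_{m,k,j} = F_{o+j} F_{o+j+1} ⋯ F_{o+j+k-1}` (rightmost applied
first, i.e. head of the list applied first) for a crystal with colors `o+1, …, o+m`. -/
def wStr (o k j : ℕ) : List ℕ := (List.range k).map (fun m => o + j + k - 1 - m)

/-- The string `S_{m,k} = w_{m,k,m-k+1} ⋯ w_{m,k,2} w_{m,k,1}` for a crystal with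
colors `o+1, …, o+m`. -/
def SStr (o m k : ℕ) : List ℕ :=
  (List.range (m - k + 1)).flatMap fun jm => wStr o k (jm + 1)

/-- The string `S_{m,m}^{a_{o+m}} ⋯ S_{m,1}^{a_{o+1}}` for a crystal with colors
`o+1, …, o+m`, defining the principal vertex with coordinates `a`. -/
def prinStr (o m : ℕ) (a : ℕ → ℕ) : List ℕ :=
  (List.range m).flatMap fun km => (List.replicate (a (o + km + 1)) (SStr o m (km + 1))).flatten

def prinOpt (K : PreGraph) (o m : ℕ) (s : K.V) (a : ℕ → ℕ) : Option K.V :=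
  applyStr K (prinStr o m a) s

/-- `p` is the principal vertex with coordinates `a` of the crystal `K` with colors
`o+1, …, o+m` and source `s`. -/
def IsPrin (K : PreGraph) (o m : ℕ) (s : K.V) (a : ℕ → ℕ) (p : K.V) : Prop :=
  prinOpt K o m s a = some p

/-- The principal lattice of an `A_n`-crystal with source `s` and parameter `c`. -/
def PrinLat (K : PreGraph) (n : ℕ) (s : K.V) (c : ℕ → ℕ) : Set K.V :=
  {p | ∃ a : ℕ → ℕ, (∀ i, 1 ≤ i → i ≤ n → a i ≤ c i) ∧ IsPrin K 0 n s a p}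

/-- One undirected step along an edge with color in `I`. -/
def stepOn (K : PreGraph) (I : Set ℕ) (u v : K.V) : Prop :=
  ∃ i ∈ I, K.F i u = some v ∨ K.F i v = some u

/-- `u` lies in the same `I`-colored component as `v`. -/
def inComp (K : PreGraph) (I : Set ℕ) (v u : K.V) : Prop :=
  Relation.ReflTransGen (stepOn K I) v u

/-- The subcrystal of `K` with color set `I` containing `v` (the maximal connected
subgraph through `v` using only colors in `I`). -/
def PreGraph.sub (K : PreGraph) (I : Set ℕ) (v : K.V) : PreGraph where
  V := {u : K.V // inComp K I v u}
  F := fun i u =>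
    if hi : i ∈ I then
      (K.F i u.1).pbind fun w hw =>
        some ⟨w, Relation.ReflTransGen.tail u.2 ⟨i, hi, Or.inl (Option.mem_def.mp hw)⟩⟩
    else none

/-- Directed reachability. -/
def dirReach (K : PreGraph) (u v : K.V) : Prop :=
  Relation.ReflTransGen (fun a b => ∃ i, K.F i a = some b) u v

/-- The interval of `K` from `p` to `q`: the subgraph formed by all vertices and
edges lying on directed paths from `p` to `q`. -/
def PreGraph.interval (K : PreGraph) (p q : K.V) : PreGraph where
  V := {w : K.V // dirReach K p w ∧ dirReach K w q}
  F := fun i u =>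
    (K.F i u.1).pbind fun w _ =>
      if hw : dirReach K p w ∧ dirReach K w q then some ⟨w, hw⟩ else none

/-- The symmetric extract: restriction to self-complementary vertices,
with `ibar`-edges given by `chain i`. -/
def extract (K : PreGraph) (chain : ℕ → K.V → Option K.V) (σ : K.V → K.V) : PreGraph where
  V := {v : K.V // σ v = v}
  F := fun i u =>
    (chain i u.1).pbind fun w _ => if hw : σ w = w then some ⟨w, hw⟩ else none

/-- The operator chain for the color `ibar` of the symmetric extract of a
symmetric `A_{2n-1}`-crystal. -/
def chainB (K : PreGraph) (n : ℕ) (i : ℕ) (u : K.V) : Option K.V :=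
  if 1 ≤ i ∧ i ≤ n then
    (if i = n then K.F n u else (K.F i u).bind (K.F (2 * n - i)))
  else none

/-- The operator chain for the color `ibar` of the symmetric extract of a
symmetric `A_{2n}`-crystal. -/
def chainC (K : PreGraph) (n : ℕ) (i : ℕ) (u : K.V) : Option K.V :=
  if 1 ≤ i ∧ i ≤ n then
    (if i = n then (((K.F n u).bind (K.F (n + 1))).bind (K.F (n + 1))).bind (K.F n)
     else (K.F i u).bind (K.F (2 * n + 1 - i)))
  else none

/-- Symmetric extract from a symmetric `A_{2n-1}`-crystal. -/
def extractB (K : PreGraph) (n : ℕ) (σ : K.V → K.V) : PreGraph := extract K (chainB K n) σ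

/-- Symmetric extract from a symmetric `A_{2n}`-crystal. -/
def extractC (K : PreGraph) (n : ℕ) (σ : K.V → K.V) : PreGraph := extract K (chainC K n) σ

/-- Admissibility of a six-tuple `(x', y, x''; y', x, y'')` in the worm model. -/
def WormOK (g1 g2 : ℕ) : ℤ × ℤ × ℤ × ℤ × ℤ × ℤ → Prop
  | (x', y, x'', y', x, y'') =>
    (0 ≤ x' ∧ x' ≤ 2 * (g1 : ℤ)) ∧ (0 ≤ x'' ∧ x'' ≤ 2 * (g1 : ℤ)) ∧
    (0 ≤ x ∧ x ≤ 2 * (g1 : ℤ)) ∧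
    (0 ≤ y' ∧ y' ≤ (g2 : ℤ)) ∧ (0 ≤ y'' ∧ y'' ≤ (g2 : ℤ)) ∧ (0 ≤ y ∧ y ≤ (g2 : ℤ)) ∧
    (2 ∣ x') ∧ (2 ∣ x'') ∧ (y' ≤ y ∧ y ≤ y'') ∧ (x' ≤ x ∧ x ≤ x'') ∧
    (y' < y → x' = x) ∧ (y < y'' → x = x'')

/-- The candidate image of a worm under the operator `1tilde`. -/
def worm1 : ℤ × ℤ × ℤ × ℤ × ℤ × ℤ → ℤ × ℤ × ℤ × ℤ × ℤ × ℤ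
  | (x', y, x'', y', x, y'') =>
    if 2 * x > x' + x'' then (x' + 2, y, x'', y', x, y'')
    else if x = x' ∧ x' = x'' ∧ y < y'' then (x', y + 1, x'', y', x, y'')
    else (x', y, x'' + 2, y', x, y'')

/-- The candidate image of a worm under the operator `2tilde`. -/
def worm2 : ℤ × ℤ × ℤ × ℤ × ℤ × ℤ → ℤ × ℤ × ℤ × ℤ × ℤ × ℤ
  | (x', y, x'', y', x, y'') =>
    if 2 * y > y' + y'' then (x', y, x'', y' + 1, x, y'')
    else if y' = y ∧ y = y'' ∧ x < x'' then (x', y, x'', y', x + 1, y'')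
    else (x', y, x'', y', x, y'' + 1)

/-- The worm graph `W(g1, g2)`, with colors `1 = 1tilde` and `2 = 2tilde`. -/
def WormGraph (g1 g2 : ℕ) : PreGraph where
  V := {w : ℤ × ℤ × ℤ × ℤ × ℤ × ℤ // WormOK g1 g2 w}
  F := fun i u =>
    if i = 1 then
      (if h1 : WormOK g1 g2 (worm1 u.1) then some ⟨worm1 u.1, h1⟩ else none)
    else if i = 2 then
      (if h2 : WormOK g1 g2 (worm2 u.1) then some ⟨worm2 u.1, h2⟩ else none)
    else none

/-- Isomorphism of colored graphs, renaming colors via `φ`. -/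
def IsoVia (K L : PreGraph) (φ : ℕ → ℕ) : Prop :=
  ∃ e : K.V ≃ L.V, ∀ i u v, K.F i u = some v ↔ L.F (φ i) (e u) = some (e v)

/-- The Cartesian product of an `i`-path of length `p` and a `j`-path of length `q`. -/
def boxGraph (i j p q : ℕ) : PreGraph where
  V := Fin (p + 1) × Fin (q + 1)
  F := fun s u =>
    if s = i then
      (if h : (u.1 : ℕ) < p then some (⟨(u.1 : ℕ) + 1, by omega⟩, u.2) else none)
    else if s = j then
      (if h : (u.2 : ℕ) < q then some (u.1, ⟨(u.2 : ℕ) + 1, by omega⟩) else none)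
    else none

/-- `B_n`-crystal: components with colors `n-1, n` are worm graphs,
with color `n-1` corresponding to `1tilde` and `n` to `2tilde`. -/
def IsBCrystal (n : ℕ) (B : PreGraph) : Prop :=
  IsColored B (Set.Icc 1 n) ∧ B.Connected ∧
  (∀ i ∈ Set.Icc 1 n, ∀ j ∈ Set.Icc 1 n, Far i j → A5at B i j) ∧
  (∀ i j, 1 ≤ i → i < n → 1 ≤ j → j < n → Neighb i j →
    ∀ v : B.V, IsCrystalOn (B.sub {i, j} v) {i, j}) ∧
  (∀ v : B.V, ∃ g1 g2 : ℕ,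
    IsoVia (B.sub ({n - 1, n} : Set ℕ) v) (WormGraph g1 g2)
      (fun x => if x = n - 1 then 1 else if x = n then 2 else 0))

/-- `C_n`-crystal: components with colors `n-1, n` are worm graphs,
with color `n-1` corresponding to `2tilde` and `n` to `1tilde`. -/
def IsCCrystal (n : ℕ) (B : PreGraph) : Prop :=
  IsColored B (Set.Icc 1 n) ∧ B.Connected ∧
  (∀ i ∈ Set.Icc 1 n, ∀ j ∈ Set.Icc 1 n, Far i j → A5at B i j) ∧
  (∀ i j, 1 ≤ i → i < n → 1 ≤ j → j < n → Neighb i j →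
    ∀ v : B.V, IsCrystalOn (B.sub {i, j} v) {i, j}) ∧
  (∀ v : B.V, ∃ g1 g2 : ℕ,
    IsoVia (B.sub ({n - 1, n} : Set ℕ) v) (WormGraph g1 g2)
      (fun x => if x = n - 1 then 2 else if x = n then 1 else 0))

/-! ### The crossing model -/

/-- `(k, i, j)` is a node `v_i^k(j)` of the supporting graph `G` for rank `n`. -/
def isNode (n k i j : ℕ) : Prop :=
  1 ≤ j ∧ j ≤ i ∧ i ≤ n ∧ i - j + 1 ≤ k ∧ k ≤ n - j + 1

instance (n k i j : ℕ) : Decidable (isNode n k i j) := by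
  unfold isNode; infer_instance

/-- Extension of a function on the nodes of `G` to the extended supporting graph:
extra nodes from which `G^k` is reachable get value `c k`, the others get `0`. -/
def fext (n : ℕ) (c : ℕ → ℕ) (f : ℕ × ℕ × ℕ → ℤ) (k i j : ℕ) : ℤ :=
  if isNode n k i j then f (k, i, j)
  else if j ≤ n - k + 1 then (c k : ℤ) else 0

/-- The slack at the node `v_i^k(j)`. -/
def epsN (n : ℕ) (c : ℕ → ℕ) (f : ℕ × ℕ × ℕ → ℤ) (k i j : ℕ) : ℤ :=
  (fext n c f k (i - 1) (j - 1) - fext n c f k i j) -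
    (fext n c f k i (j - 1) - fext n c f k (i + 1) j)

/-- The total slack at the multinode `V_i(j)`. -/
def epsTot (n : ℕ) (c : ℕ → ℕ) (f : ℕ × ℕ × ℕ → ℤ) (i j : ℕ) : ℤ :=
  ∑ k ∈ Finset.Icc (i - j + 1) (n - j + 1), epsN n c f k i j

/-- The reduced slack at the multinode `V_i(j)`. -/
def teps (n : ℕ) (c : ℕ → ℕ) (f : ℕ × ℕ × ℕ → ℤ) (i j : ℕ) : ℤ :=
  if hj : (Finset.Icc 1 j).Nonempty then
    max 0 ((Finset.Icc 1 j).inf' hj fun p => ∑ q ∈ Finset.Icc p j, epsTot n c f i q)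
  else 0

/-- `k0` satisfies the switch condition in the multinode `V_i(j)`. -/
def switchCond (n : ℕ) (f : ℕ × ℕ × ℕ → ℤ) (i j k0 : ℕ) : Prop :=
  i - j + 1 ≤ k0 ∧ k0 ≤ n - j + 1 ∧
  (∀ k, i - j + 1 ≤ k → k < k0 → isNode n k (i + 1) (j + 1) →
    f (k, i, j) = f (k, i + 1, j + 1)) ∧
  (∀ k, k0 < k → k ≤ n - j + 1 → isNode n k (i + 1) j →
    f (k, i + 1, j) = f (k, i, j))

/-- The switch-node (first node with the switch property) of the multinode `V_i(j)`. -/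
def switchNode (n : ℕ) (f : ℕ × ℕ × ℕ → ℤ) (i j : ℕ) : ℕ :=
  sInf {k0 | switchCond n f i j k0}

/-- Feasible functions of the crossing model (normalized to vanish off the nodes). -/
def Feasible (n : ℕ) (c : ℕ → ℕ) (f : ℕ × ℕ × ℕ → ℤ) : Prop :=
  (∀ k i j, ¬ isNode n k i j → f (k, i, j) = 0) ∧
  (∀ k i j, isNode n k i j → isNode n k (i - 1) j → f (k, i - 1, j) ≤ f (k, i, j)) ∧
  (∀ k i j, isNode n k i j → isNode n k (i + 1) (j + 1) → f (k, i + 1, j + 1) ≤ f (k, i, j)) ∧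
  (∀ k i j, isNode n k i j → 0 ≤ f (k, i, j) ∧ f (k, i, j) ≤ (c k : ℤ)) ∧
  (∀ i j, 1 ≤ j → j ≤ i → i ≤ n → ∃ k0, switchCond n f i j k0)

/-- Increase `f` by one at the node `(k, i, j)`. -/
def bump (f : ℕ × ℕ × ℕ → ℤ) (k i j : ℕ) : ℕ × ℕ × ℕ → ℤ :=
  fun x => if x = (k, i, j) then f x + 1 else f x

/-- The crossing-model graph `Kscr(c)`: vertices are the feasible functions, and
the move `φ_i` increases `f` by one at the switch-node of the active multinode. -/
def Kscr (n : ℕ) (c : ℕ → ℕ) : PreGraph where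
  V := {f : ℕ × ℕ × ℕ → ℤ // Feasible n c f}
  F := fun i f =>
    if 1 ≤ i ∧ i ≤ n ∧ ∃ j, 1 ≤ j ∧ j ≤ i ∧ 0 < teps n c f.1 i j then
      (let j := sSup {j | 1 ≤ j ∧ j ≤ i ∧ 0 < teps n c f.1 i j}
       let g := bump f.1 (switchNode n f.1 i j) i j
       if hg : Feasible n c g then some ⟨g, hg⟩ else none)
    else none

/-- The function `f_{a,D}` of the crossing model. -/
def faD (n : ℕ) (a : ℕ → ℕ) (D : ℕ → ℤ) : ℕ × ℕ × ℕ → ℤ := fun x =>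
  if isNode n x.1 x.2.1 x.2.2 then
    (if x.2.1 - x.2.2 + 1 = x.1 then (a x.1 : ℤ) else (a x.1 : ℤ) + min (D (x.1 - 1)) 0) +
    (if x.2.2 ≤ n - x.1 then max (D x.1) 0 else 0)
  else 0

/-! ### Descriptions of self-complementary vertices -/

/-- `(a1, a2, δ, l)` is the description of a self-complementary vertex `v` of a
symmetric `A_3`-crystal `K` with source `s` and parameter `c`. -/
def IsDescB (K : PreGraph) (s : K.V) (c : ℕ → ℕ) (v : K.V) (q : ℕ × ℕ × ℤ × ℕ) : Prop :=
  q.2.2.2 = K.t 2 v ∧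
  ∃ (a : ℕ → ℕ) (pa : K.V),
    a 1 = q.1 ∧ a 2 = q.2.1 ∧ a 3 = ((q.1 : ℤ) + max q.2.2.1 0).toNat ∧
    (∀ i, 1 ≤ i → i ≤ 3 → a i ≤ c i) ∧
    IsPrin K 0 3 s a pa ∧ inComp K (Set.Icc 1 2) pa v ∧
    0 ≤ (q.2.1 : ℤ) + q.2.2.1 ∧ 0 ≤ (a 3 : ℤ) - q.2.2.1 ∧
    ∃ s' : (K.sub (Set.Icc 1 2) pa).V, IsSource (K.sub (Set.Icc 1 2) pa) s' ∧
    ∃ z : (K.sub (Set.Icc 1 2) pa).V,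
      IsPrin (K.sub (Set.Icc 1 2) pa) 0 2 s'
        (fun i => if i = 1 then ((q.2.1 : ℤ) + q.2.2.1).toNat else ((a 3 : ℤ) - q.2.2.1).toNat) z ∧
      inComp K ({2} : Set ℕ) z.1 v

/-- The polytope of descriptions for a symmetric `A_3`-crystal with parameter `(c1, c2, c1)`. -/
def QuadB (c1 c2 : ℕ) : Set (ℕ × ℕ × ℤ × ℕ) :=
  {q | q.1 ≤ c1 ∧ q.2.1 ≤ c2 ∧ -(q.2.1 : ℤ) ≤ q.2.2.1 ∧ (q.2.1 : ℤ) - (c2 : ℤ) ≤ q.2.2.1 ∧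
       q.2.2.1 ≤ (c1 : ℤ) - (q.1 : ℤ) ∧ (q.2.2.2 : ℤ) ≤ (c2 : ℤ) + 2 * q.2.2.1}

/-- The worm associated to the description `(a1, a2, δ, l)`. -/
def wtupleB (a1 a2 : ℕ) (δ : ℤ) (l : ℕ) : ℤ × ℤ × ℤ × ℤ × ℤ × ℤ :=
  let a3 : ℤ := (a1 : ℤ) + max δ 0
  let tr : ℤ × ℤ × ℤ :=
    if 0 ≤ δ then
      if (l : ℤ) ≤ (a2 : ℤ) then ((l : ℤ), 2 * (a1 : ℤ), (a2 : ℤ))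
      else if (l : ℤ) ≤ (a2 : ℤ) + 2 * δ then
        ((a2 : ℤ), 2 * (a1 : ℤ) + (l : ℤ) - (a2 : ℤ), (a2 : ℤ))
      else ((a2 : ℤ), 2 * a3, (l : ℤ) - 2 * δ)
    else
      if (l : ℤ) ≤ (a2 : ℤ) + δ then ((l : ℤ), 2 * (a1 : ℤ), (a2 : ℤ) - δ)
      else ((a2 : ℤ) + δ, 2 * (a1 : ℤ), (l : ℤ) - 2 * δ)
  (2 * (a1 : ℤ), (a2 : ℤ), 2 * a3, tr.1, tr.2.1, tr.2.2)

def wtQ (q : ℕ × ℕ × ℤ × ℕ) : ℤ × ℤ × ℤ × ℤ × ℤ × ℤ :=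
  wtupleB q.1 q.2.1 q.2.2.1 q.2.2.2

/-- The string `(F_2 F_3)^r (F_3 F_2)^r` (rightmost applied first). -/
def diagStr (r : ℕ) : List ℕ :=
  (List.replicate r ([2, 3] : List ℕ)).flatten ++ (List.replicate r ([3, 2] : List ℕ)).flatten

/-- `(a1, a2, δ, ρ)` is the description of a self-complementary vertex `v` of a
symmetric `A_4`-crystal `K` with source `s` and parameter `c`. -/
def IsDescC (K : PreGraph) (s : K.V) (c : ℕ → ℕ) (v : K.V) (q : ℕ × ℕ × ℤ × ℕ) : Prop :=
  ∃ (a : ℕ → ℕ) (pa : K.V),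
    a 1 = q.1 ∧ a 2 = q.2.1 ∧ a 3 = ((q.2.1 : ℤ) + min q.2.2.1 0).toNat ∧
    a 4 = ((q.1 : ℤ) + max q.2.2.1 0).toNat ∧
    (∀ i, 1 ≤ i → i ≤ 4 → a i ≤ c i) ∧
    IsPrin K 0 4 s a pa ∧ inComp K (Set.Icc 1 3) pa v ∧
    0 ≤ (q.2.1 : ℤ) + q.2.2.1 ∧ 0 ≤ (a 4 : ℤ) - q.2.2.1 ∧
    (∃ s' : (K.sub (Set.Icc 1 3) pa).V, IsSource (K.sub (Set.Icc 1 3) pa) s' ∧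
     ∃ z : (K.sub (Set.Icc 1 3) pa).V,
       IsPrin (K.sub (Set.Icc 1 3) pa) 0 3 s'
         (fun i => if i = 1 then ((q.2.1 : ℤ) + q.2.2.1).toNat
                   else if i = 2 then a 3 else ((a 4 : ℤ) - q.2.2.1).toNat) z ∧
       inComp K (Set.Icc 2 3) z.1 v) ∧
    (∃ stil : (K.sub (Set.Icc 2 3) v).V, IsSource (K.sub (Set.Icc 2 3) v) stil ∧
       applyStr (K.sub (Set.Icc 2 3) v) (diagStr q.2.2.2) stil =
         some ⟨v, Relation.ReflTransGen.refl⟩)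

/-- The polytope of descriptions for a symmetric `A_4`-crystal with parameter
`(c1, c2, c2, c1)`. -/
def QuadC (c1 c2 : ℕ) : Set (ℕ × ℕ × ℤ × ℕ) :=
  {q | q.1 ≤ c1 ∧ q.2.1 ≤ c2 ∧ -(q.2.1 : ℤ) ≤ q.2.2.1 ∧
       q.2.2.1 ≤ (c1 : ℤ) - (q.1 : ℤ) ∧ (q.2.2.2 : ℤ) ≤ (c2 : ℤ) + q.2.2.1}

end

/-!
An `ibar`-edge of the extract is a composite `F_{i'} F_i` between self-complementary vertices,
and for `i, j < n` the colors `i, j` are far from the mirrored colors `i', j' > n`, so by (A5)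
these operators commute. Hence `h_ibar` and `t_ibar` in the extract are `h_i` and `t_i` of `K`,
and (A2) is inherited from `K`. For (A3) and (A4), a relation `α₁ u = α₂ u = z` of `K` at a
self-complementary vertex `u` (a commuting square or a Verma relation in the colors `i, j`) has
the mirrored relation `α₁' u = α₂' u = σ z`; pushing the mirrored words through the original ones
by (A5) shows that the doubled words `a₁ a₁' a₂ a₂' …` of `α₁` and `α₂` reach a common vertex,
which is the corresponding relation in the extract. The dual relations are obtained in the same
way from the inverse operators. All axioms are local, so they pass to connected components.
-/

section OptIter

variable {V : Type} {f : V → Option V}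

theorem optIter_one (f : V → Option V) (v : V) : optIter f 1 v = f v := by
  simp [optIter]

theorem optIter_add (f : V → Option V) (a b : ℕ) (v : V) :
    optIter f (a + b) v = (optIter f a v).bind (optIter f b) := by
  induction a generalizing v with
  | zero => simp [optIter]
  | succ a ih => simp [Nat.add_right_comm a 1 b, optIter, ih, Option.bind_assoc]

theorem optIter_succ' (f : V → Option V) (k : ℕ) (v : V) :
    optIter f (k + 1) v = (optIter f k v).bind f := by
  rw [optIter_add]; simp only [optIter_one]

theorem isSome_optIter_of_le {m k : ℕ} (hmk : m ≤ k) {v : V}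
    (h : (optIter f k v).isSome) : (optIter f m v).isSome := by
  rw [← Nat.add_sub_cancel' hmk, optIter_add] at h
  cases hm : optIter f m v <;> simp_all

theorem exists_optIter_eq_of_le {m k : ℕ} (hmk : m ≤ k) {u v : V}
    (h : optIter f k u = some v) : ∃ w, optIter f m w = some v := by
  rw [← Nat.sub_add_cancel hmk, optIter_add] at h
  obtain ⟨w, -, hw⟩ := Option.bind_eq_some_iff.mp h
  exact ⟨w, hw⟩

theorem eq_add_of_optIter_eq_some (φ : V → ℕ) (hstep : ∀ u w, f u = some w → φ u = φ w + 1)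
    {k : ℕ} {u w : V} (h : optIter f k u = some w) : φ u = φ w + k := by
  induction k generalizing u with
  | zero => cases h; rfl
  | succ k ih =>
    obtain ⟨x, hx, hxw⟩ := Option.bind_eq_some_iff.mp h
    rw [hstep u x hx, ih hxw]; ring

theorem optIter_map_of_semiconj {W : Type} {g : W → Option W} {π : V → W}
    (h : ∀ x, (f x).map π = g (π x)) (k : ℕ) (x : V) :
    (optIter f k x).map π = optIter g k (π x) := by
  induction k generalizing x with
  | zero => rfl
  | succ k ih =>
    simp only [optIter, Option.map_bind, ← h x, Option.bind_map]
    exact congrArg _ (funext ih)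

variable (hacyc : ∀ (v : V) (k : ℕ), 0 < k → optIter f k v ≠ some v)
include hacyc

theorem optIter_injective_of_acyclic {u x : V} {a b : ℕ}
    (ha : optIter f a u = some x) (hb : optIter f b u = some x) : a = b := by
  have key : ∀ a b, a < b → optIter f a u = some x → optIter f b u = some x → False := by
    intro a b hab ha hb
    rw [← Nat.add_sub_cancel' hab.le, optIter_add, ha] at hb
    exact hacyc x (b - a) (by omega) hb
  rcases lt_trichotomy a b with h | h | h
  · exact (key a b h ha hb).elim
  · exact h
  · exact (key b a h hb ha).elim

theorem lt_card_of_isSome_optIter [Finite V] {u : V} {k : ℕ}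
    (hk : (optIter f k u).isSome) : k < Nat.card V := by
  let g : Fin (k + 1) → V := fun m => (optIter f m u).get (isSome_optIter_of_le (by omega) hk)
  have hg : Function.Injective g := by
    intro m₁ m₂ h
    have h₁ : optIter f m₁ u = some (g m₁) := (Option.some_get _).symm
    have h₂ : optIter f m₂ u = some (g m₁) := h ▸ (Option.some_get _).symm
    exact Fin.ext (optIter_injective_of_acyclic hacyc h₁ h₂)
  simpa using Nat.card_le_card_of_injective g hg

end OptIter

namespace PreGraph

def InjectiveAt (L : PreGraph) (p : ℕ) : Prop :=
  ∀ u u' v, L.F p u = some v → L.F p u' = some v → u = u'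

def AcyclicAt (L : PreGraph) (p : ℕ) : Prop :=
  ∀ v k, 0 < k → optIter (L.F p) k v ≠ some v

theorem Finv_eq_some_iff {L : PreGraph} {p : ℕ} (hinj : L.InjectiveAt p) {u v : L.V} :
    L.Finv p v = some u ↔ L.F p u = some v := by
  unfold Finv
  split_ifs with h
  · exact ⟨fun e => Option.some.inj e ▸ h.choose_spec,
      fun e => congrArg some (hinj _ _ _ h.choose_spec e)⟩
  · simpa using fun e => h ⟨u, e⟩

theorem h_eq_of_step {L : PreGraph} {p : ℕ} (φ : L.V → ℕ)
    (hpos : ∀ u, (L.F p u).isSome ↔ 0 < φ u)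
    (hstep : ∀ u w, L.F p u = some w → φ u = φ w + 1) (u : L.V) : L.h p u = φ u := by
  have key : ∀ k u, (optIter (L.F p) k u).isSome ↔ k ≤ φ u := by
    intro k
    induction k with
    | zero => simp [optIter]
    | succ k ih =>
      intro u
      cases h : L.F p u with
      | none => have := (hpos u).not; simp_all [optIter]
      | some w => simp [optIter, h, ih, hstep u w h]
  show sSup _ = _
  rw [show {k | (optIter (L.F p) k u).isSome = true} = Set.Iic (φ u) from
    Set.ext fun k => key k u, csSup_Iic]

theorem t_eq_of_step {L : PreGraph} {p : ℕ} (ψ : L.V → ℕ)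
    (hpos : ∀ v, (∃ u, L.F p u = some v) ↔ 0 < ψ v)
    (hstep : ∀ u w, L.F p u = some w → ψ w = ψ u + 1) (v : L.V) : L.t p v = ψ v := by
  have key : ∀ k v, (∃ u, optIter (L.F p) k u = some v) ↔ k ≤ ψ v := by
    intro k
    induction k with
    | zero => simp [optIter]
    | succ k ih =>
      intro v
      simp only [optIter_succ', Option.bind_eq_some_iff]
      constructor
      · rintro ⟨u, x, hx, hxv⟩
        have := (ih x).1 ⟨u, hx⟩
        rw [hstep x v hxv]; omega
      · intro hk
        obtain ⟨x, hxv⟩ := (hpos v).2 (by omega)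
        obtain ⟨u, hu⟩ := (ih x).2 (by rw [hstep x v hxv] at hk; omega)
        exact ⟨u, x, hu, hxv⟩
  show sSup _ = _
  rw [show {k | ∃ u, optIter (L.F p) k u = some v} = Set.Iic (ψ v) from
    Set.ext fun k => key k v, csSup_Iic]

section Colored

variable {K : PreGraph} {C : Set ℕ} (hK : IsColored K C) {p : ℕ}
include hK

theorem isSome_optIter_iff_le_h {k : ℕ} {v : K.V} :
    (optIter (K.F p) k v).isSome ↔ k ≤ K.h p v := by
  have := hK.1
  have hbdd : BddAbove {k | (optIter (K.F p) k v).isSome} :=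
    ⟨Nat.card K.V, fun k hk => (lt_card_of_isSome_optIter (hK.2.2.2 p) hk).le⟩
  have hne : {k | (optIter (K.F p) k v).isSome}.Nonempty := ⟨0, rfl⟩
  exact ⟨fun h => le_csSup hbdd h, fun h => isSome_optIter_of_le h (Nat.sSup_mem hne hbdd)⟩

theorem exists_optIter_eq_iff_le_t {k : ℕ} {v : K.V} :
    (∃ u, optIter (K.F p) k u = some v) ↔ k ≤ K.t p v := by
  have := hK.1
  have hbdd : BddAbove {k | ∃ u, optIter (K.F p) k u = some v} :=
    ⟨Nat.card K.V, fun k ⟨u, hu⟩ =>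
      (lt_card_of_isSome_optIter (hK.2.2.2 p) (u := u) (by simp [hu])).le⟩
  refine ⟨fun h => le_csSup hbdd h, fun h => ?_⟩
  have hne : {k | ∃ u, optIter (K.F p) k u = some v}.Nonempty := ⟨0, v, rfl⟩
  obtain ⟨u, hu⟩ := Nat.sSup_mem hne hbdd
  exact exists_optIter_eq_of_le h hu

theorem isSome_F_iff_h_pos {v : K.V} : (K.F p v).isSome ↔ 0 < K.h p v := by
  rw [← optIter_one (K.F p) v, isSome_optIter_iff_le_h hK]; rfl

theorem exists_F_eq_iff_t_pos {v : K.V} : (∃ u, K.F p u = some v) ↔ 0 < K.t p v := by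
  rw [show 0 < K.t p v ↔ 1 ≤ K.t p v from Iff.rfl, ← exists_optIter_eq_iff_le_t hK]
  simp only [optIter_one]

theorem h_eq_succ_of_F {u v : K.V} (huv : K.F p u = some v) : K.h p u = K.h p v + 1 := by
  have key : ∀ k, k + 1 ≤ K.h p u ↔ k ≤ K.h p v := fun k => by
    rw [← isSome_optIter_iff_le_h hK, ← isSome_optIter_iff_le_h hK]
    simp [optIter, huv]
  have := (key (K.h p v)).2 le_rfl
  have := (key (K.h p u - 1)).1 (by omega)
  omega

theorem t_eq_succ_of_F {u v : K.V} (huv : K.F p u = some v) : K.t p v = K.t p u + 1 := by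
  have key : ∀ k, k + 1 ≤ K.t p v ↔ k ≤ K.t p u := fun k => by
    rw [← exists_optIter_eq_iff_le_t hK, ← exists_optIter_eq_iff_le_t hK]
    simp only [optIter_succ', Option.bind_eq_some_iff]
    constructor
    · rintro ⟨w, x, hw, hxv⟩
      exact ⟨w, hK.2.2.1 p x u v hxv huv ▸ hw⟩
    · rintro ⟨w, hw⟩
      exact ⟨w, u, hw, huv⟩
  have := (key (K.t p u)).2 le_rfl
  have := (key (K.t p v - 1)).1 (by omega)
  omega

end Colored

end PreGraph

theorem Option.exists_eq_some_of_map_eq_some {α β : Type} {f : α → β} (hf : Function.Injective f)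
    {o₁ o₂ : Option α} {b : β} (h₁ : o₁.map f = some b) (h₂ : o₂.map f = some b) :
    ∃ a, o₁ = some a ∧ o₂ = some a := by
  obtain ⟨a, ha, -⟩ := Option.map_eq_some_iff.mp h₁
  exact ⟨a, ha, (Option.map_injective hf (h₁.trans h₂.symm)) ▸ ha⟩

section Words

variable {V : Type} (G : ℕ → V → Option V)

def wordApply : List ℕ → V → Option V
  | [], v => some v
  | a :: l, v => (G a v).bind (wordApply l)

def Diamond (a b : ℕ) : Prop :=
  ∀ x y z, G a x = some y → G b x = some z → ∃ w, G b y = some w ∧ G a z = some w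

variable {G}

theorem Diamond.symm {a b : ℕ} (h : Diamond G a b) : Diamond G b a := fun x y z hy hz =>
  (h x z y hz hy).imp fun _ hw => hw.symm

theorem wordApply_singleton (a : ℕ) (v : V) : wordApply G [a] v = G a v := by
  simp [wordApply]

theorem wordApply_append (l₁ l₂ : List ℕ) (v : V) :
    wordApply G (l₁ ++ l₂) v = (wordApply G l₁ v).bind (wordApply G l₂) := by
  induction l₁ generalizing v with
  | nil => simp [wordApply]
  | cons a l ih => simp [wordApply, ih, Option.bind_assoc]

theorem wordApply_pair (a b : ℕ) (v : V) : wordApply G [a, b] v = (G a v).bind (G b) := by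
  simp [wordApply]

theorem wordApply_four (a b c d : ℕ) (v : V) :
    wordApply G [a, b, c, d] v = (((G a v).bind (G b)).bind (G c)).bind (G d) := by
  simp [wordApply, Option.bind_assoc]

theorem Diamond.wordApply_right {a : ℕ} {β : List ℕ} (hd : ∀ b ∈ β, Diamond G a b)
    {x y z : V} (hy : G a x = some y) (hz : wordApply G β x = some z) :
    ∃ w, wordApply G β y = some w ∧ G a z = some w := by
  induction β generalizing x y with
  | nil => cases hz; exact ⟨y, rfl, hy⟩
  | cons b β ih =>
    obtain ⟨x', hx', hz⟩ := Option.bind_eq_some_iff.mp hz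
    obtain ⟨y', hy', hxy'⟩ := hd b (by simp) x y x' hy hx'
    obtain ⟨w, hw, hzw⟩ := ih (fun c hc => hd c (by simp [hc])) hxy' hz
    exact ⟨w, by simp [wordApply, hy', hw], hzw⟩

theorem exists_wordApply_diamond {α β : List ℕ} (hd : ∀ a ∈ α, ∀ b ∈ β, Diamond G a b)
    {x y z : V} (hy : wordApply G α x = some y) (hz : wordApply G β x = some z) :
    ∃ w, wordApply G β y = some w ∧ wordApply G α z = some w := by
  induction α generalizing x z with
  | nil => cases hy; exact ⟨z, hz, rfl⟩
  | cons a α ih =>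
    obtain ⟨x', hx', hy⟩ := Option.bind_eq_some_iff.mp hy
    obtain ⟨z', hz', hzz'⟩ := Diamond.wordApply_right (hd a (by simp)) hx' hz
    obtain ⟨w, hw, hz'w⟩ := ih (fun c hc => hd c (by simp [hc])) hy hz'
    exact ⟨w, hw, by simp [wordApply, hzz', hz'w]⟩

theorem wordApply_flatMap_pair {m : ℕ → ℕ} {α : List ℕ}
    (hd : ∀ a ∈ α, ∀ b ∈ α, Diamond G a (m b)) {x y z : V}
    (hy : wordApply G α x = some y) (hz : wordApply G (α.map m) x = some z) :
    wordApply G (α.flatMap fun a => [a, m a]) x = wordApply G (α.map m) y := by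
  induction α generalizing x y z with
  | nil => cases hy; rfl
  | cons a α ih =>
    obtain ⟨x₁, hx₁, hy⟩ := Option.bind_eq_some_iff.mp hy
    obtain ⟨x₂, hx₂, hz⟩ := Option.bind_eq_some_iff.mp hz
    obtain ⟨u, hu₁, hu₂⟩ := hd a (by simp) a (by simp) x x₁ x₂ hx₁ hx₂
    obtain ⟨y', huy', hy'⟩ := Diamond.wordApply_right
      (fun c hc => (hd c (by simp [hc]) a (by simp)).symm) hu₁ hy
    obtain ⟨z', hz', -⟩ := Diamond.wordApply_right
      (List.forall_mem_map.2 fun c hc => hd a (by simp) c (by simp [hc])) hu₂ hz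
    have := ih (fun c hc b hb => hd c (by simp [hc]) b (by simp [hb])) huy' hz'
    simp [wordApply, hx₁, hu₁, hy', this]

theorem wordApply_map_of_equivariant {m : ℕ → ℕ} {σ : V → V} {α : List ℕ}
    (hσ : ∀ a ∈ α, ∀ x y, G a x = some y → G (m a) (σ x) = some (σ y)) {x y : V}
    (h : wordApply G α x = some y) : wordApply G (α.map m) (σ x) = some (σ y) := by
  induction α generalizing x with
  | nil => cases h; rfl
  | cons a α ih =>
    obtain ⟨x', hx', h⟩ := Option.bind_eq_some_iff.mp h
    simp [wordApply, hσ a (by simp) x x' hx', ih (fun b hb => hσ b (by simp [hb])) h]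

theorem exists_wordApply_flatMap_pair_eq {m : ℕ → ℕ} {σ : V → V} {P : Set ℕ}
    (hd : ∀ a ∈ P, ∀ b ∈ P, Diamond G a (m b))
    (hσ : ∀ a ∈ P, ∀ x y, G a x = some y → G (m a) (σ x) = some (σ y))
    {α₁ α₂ : List ℕ} (h₁ : ∀ a ∈ α₁, a ∈ P) (h₂ : ∀ a ∈ α₂, a ∈ P) {x z : V} (hx : σ x = x)
    (hz₁ : wordApply G α₁ x = some z) (hz₂ : wordApply G α₂ x = some z) :
    ∃ w, wordApply G (α₁.flatMap fun a => [a, m a]) x = some w ∧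
      wordApply G (α₂.flatMap fun a => [a, m a]) x = some w := by
  have hdm : ∀ {α β : List ℕ}, (∀ a ∈ α, a ∈ P) → (∀ a ∈ β, a ∈ P) →
      ∀ a ∈ α, ∀ b ∈ β.map m, Diamond G a b := by
    intro α β hα hβ a ha b hb
    obtain ⟨c, hc, rfl⟩ := List.mem_map.mp hb
    exact hd a (hα a ha) c (hβ c hc)
  have hσz : ∀ {α : List ℕ}, (∀ a ∈ α, a ∈ P) → wordApply G α x = some z →
      wordApply G (α.map m) x = some (σ z) := fun hα hz =>
    hx ▸ wordApply_map_of_equivariant (fun a ha => hσ a (hα a ha)) hz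
  obtain ⟨w₁, hw₁, hσw₁⟩ := exists_wordApply_diamond (hdm h₂ h₁) hz₂ (hσz h₁ hz₁)
  obtain ⟨w₂, hw₂, hσw₂⟩ := exists_wordApply_diamond (hdm h₂ h₂) hz₂ (hσz h₂ hz₂)
  obtain rfl : w₁ = w₂ := Option.some.inj (hσw₁.symm.trans hσw₂)
  refine ⟨w₁, ?_, ?_⟩
  · rw [wordApply_flatMap_pair (fun a ha b hb => hd a (h₁ a ha) b (h₁ b hb)) hz₁ (hσz h₁ hz₁), hw₁]
  · rw [wordApply_flatMap_pair (fun a ha b hb => hd a (h₂ a ha) b (h₂ b hb)) hz₂ (hσz h₂ hz₂), hw₂]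

theorem wordApply_map_of_semiconj {W : Type} {H : ℕ → W → Option W} {π : V → W}
    {τ : ℕ → List ℕ} {α : List ℕ}
    (h : ∀ a ∈ α, ∀ x, (G a x).map π = wordApply H (τ a) (π x)) (x : V) :
    (wordApply G α x).map π = wordApply H (α.flatMap τ) (π x) := by
  induction α generalizing x with
  | nil => rfl
  | cons a α ih =>
    have ih' : ∀ y, (wordApply G α y).map π = wordApply H (α.flatMap τ) (π y) :=
      ih fun b hb => h b (by simp [hb])
    rw [List.flatMap_cons, wordApply_append, ← h a (by simp), Option.bind_map]
    simp only [wordApply, Option.map_bind]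
    exact congrArg _ (funext ih')

theorem exists_wordApply_eq_of_doubling {m : ℕ → ℕ} {σ : V → V} {P : Set ℕ}
    (hd : ∀ a ∈ P, ∀ b ∈ P, Diamond G a (m b))
    (hσ : ∀ a ∈ P, ∀ x y, G a x = some y → G (m a) (σ x) = some (σ y))
    {Gfix : ℕ → {x // σ x = x} → Option {x // σ x = x}}
    (hfix : ∀ a ∈ P, ∀ u, (Gfix a u).map Subtype.val = wordApply G [a, m a] u.1)
    {α₁ α₂ : List ℕ} (h₁ : ∀ a ∈ α₁, a ∈ P) (h₂ : ∀ a ∈ α₂, a ∈ P) (u : {x // σ x = x}) {z : V}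
    (hz₁ : wordApply G α₁ u.1 = some z) (hz₂ : wordApply G α₂ u.1 = some z) :
    ∃ w, wordApply Gfix α₁ u = some w ∧ wordApply Gfix α₂ u = some w := by
  have hmap : ∀ {α : List ℕ}, (∀ a ∈ α, a ∈ P) → (wordApply Gfix α u).map Subtype.val =
      wordApply G (α.flatMap fun a => [a, m a]) u.1 :=
    fun hα => wordApply_map_of_semiconj (fun a ha => hfix a (hα a ha)) u
  obtain ⟨W, hW₁, hW₂⟩ := exists_wordApply_flatMap_pair_eq hd hσ h₁ h₂ u.2 hz₁ hz₂
  exact Option.exists_eq_some_of_map_eq_some Subtype.val_injective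
    ((hmap h₁).trans hW₁) ((hmap h₂).trans hW₂)

end Words

theorem Far.symm {p q : ℕ} (h : Far p q) : Far q p := Or.symm h

theorem Far.ne {p q : ℕ} (h : Far p q) : p ≠ q := by
  unfold Far at h; omega

theorem not_neighb_of_far {p q : ℕ} (h : Far p q) : ¬ Neighb p q := by
  unfold Far Neighb at *; omega

namespace IsCrystalOn

open PreGraph

variable {K : PreGraph} {C : Set ℕ} (hK : IsCrystalOn K C) {p q : ℕ}
  (hp : p ∈ C) (hq : q ∈ C) (hpq : Far p q)
include hK hp hq hpq

theorem h_eq_of_far {u v : K.V} (huv : K.F p u = some v) : K.h q v = K.h q u := by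
  obtain ⟨h₁, h₂, h₃⟩ := (hK.2.2.1 p hp q hq hpq.ne).1 u v huv
  rw [if_neg (not_neighb_of_far hpq)] at h₃
  omega

theorem t_eq_of_far {u v : K.V} (huv : K.F p u = some v) : K.t q v = K.t q u := by
  obtain ⟨h₁, h₂, h₃⟩ := (hK.2.2.1 p hp q hq hpq.ne).1 u v huv
  rw [if_neg (not_neighb_of_far hpq)] at h₃
  omega

theorem diamond_F : Diamond K.F p q := by
  intro x y z hy hz
  obtain ⟨w, hw₁, hw₂⟩ := hK.2.2.2.2 p hp q hq hpq (K.F p) (by simp) (K.F q) (by simp) x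
    (by simp [hy]) (by simp [hz])
  rw [hy] at hw₁
  rw [hz] at hw₂
  exact ⟨w, hw₁, hw₂⟩

theorem diamond_Finv : Diamond K.Finv p q := by
  intro x y z hy hz
  obtain ⟨w, hw₁, hw₂⟩ := hK.2.2.2.2 p hp q hq hpq (K.Finv p) (by simp) (K.Finv q) (by simp) x
    (by simp [hy]) (by simp [hz])
  rw [hy] at hw₁
  rw [hz] at hw₂
  exact ⟨w, hw₁, hw₂⟩

theorem exists_F_F_swap {x y z : K.V} (hxy : K.F p x = some y) (hyz : K.F q y = some z) :
    ∃ y', K.F q x = some y' ∧ K.F p y' = some z := by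
  have hqx : 0 < K.h q x := by
    rw [← hK.h_eq_of_far hp hq hpq hxy, ← isSome_F_iff_h_pos hK.1, hyz]; rfl
  obtain ⟨y', hy'⟩ := Option.isSome_iff_exists.mp ((isSome_F_iff_h_pos hK.1).2 hqx)
  obtain ⟨w, hw, hy'w⟩ := hK.diamond_F hp hq hpq x y y' hxy hy'
  exact ⟨y', hy', (Option.some.inj (hyz.symm.trans hw)) ▸ hy'w⟩

end IsCrystalOn

namespace PreGraph

variable {L : PreGraph} {I : Set ℕ} {v : L.V} {p q : ℕ}

theorem sub_F_map (hp : p ∈ I) (u : (L.sub I v).V) :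
    ((L.sub I v).F p u).map Subtype.val = L.F p u.1 := by
  show Option.map Subtype.val (dite _ _ _) = _
  rw [dif_pos hp, Option.map_pbind]
  simp

theorem sub_F_of_not_mem (hp : p ∉ I) (u : (L.sub I v).V) : (L.sub I v).F p u = none :=
  dif_neg hp

theorem sub_F_eq_some_iff (hp : p ∈ I) {u w : (L.sub I v).V} :
    (L.sub I v).F p u = some w ↔ L.F p u.1 = some w.1 := by
  rw [← sub_F_map hp]
  exact ((Option.map_injective Subtype.val_injective).eq_iff (b := some w)).symm

theorem exists_sub_F_eq (hp : p ∈ I) {u : (L.sub I v).V} {y : L.V} (h : L.F p u.1 = some y) :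
    ∃ w : (L.sub I v).V, (L.sub I v).F p u = some w ∧ w.1 = y :=
  ⟨⟨y, u.2.tail ⟨p, hp, Or.inl h⟩⟩, (sub_F_eq_some_iff hp).2 h, rfl⟩

theorem exists_sub_F_eq_of_F_eq (hp : p ∈ I) {u : (L.sub I v).V} {x : L.V}
    (h : L.F p x = some u.1) : ∃ w : (L.sub I v).V, (L.sub I v).F p w = some u ∧ w.1 = x :=
  ⟨⟨x, u.2.tail ⟨p, hp, Or.inr h⟩⟩, (sub_F_eq_some_iff hp).2 h, rfl⟩

theorem sub_optIter_map (hp : p ∈ I) (k : ℕ) (u : (L.sub I v).V) :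
    (optIter ((L.sub I v).F p) k u).map Subtype.val = optIter (L.F p) k u.1 :=
  optIter_map_of_semiconj (sub_F_map hp) k u

theorem inComp_of_optIter_eq (hp : p ∈ I) {k : ℕ} {x y : L.V}
    (h : optIter (L.F p) k x = some y) (hy : inComp L I v y) : inComp L I v x := by
  induction k generalizing x with
  | zero => cases h; exact hy
  | succ k ih =>
    obtain ⟨x', hx', h⟩ := Option.bind_eq_some_iff.mp h
    exact (ih h).tail ⟨p, hp, Or.inr hx'⟩

theorem sub_h (hp : p ∈ I) (u : (L.sub I v).V) : (L.sub I v).h p u = L.h p u.1 := by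
  unfold PreGraph.h
  congr 1
  ext k
  rw [Set.mem_ofPred_eq, Set.mem_ofPred_eq, ← sub_optIter_map hp k u]
  exact iff_of_eq (congrArg (· = true) Option.isSome_map.symm)

theorem sub_t (hp : p ∈ I) (u : (L.sub I v).V) : (L.sub I v).t p u = L.t p u.1 := by
  unfold PreGraph.t
  congr 1
  ext k
  constructor
  · rintro ⟨w, hw⟩
    exact ⟨w.1, by rw [← sub_optIter_map hp, hw]; rfl⟩
  · rintro ⟨x, hx⟩
    refine ⟨⟨x, inComp_of_optIter_eq hp hx u.2⟩, Option.map_injective Subtype.val_injective ?_⟩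
    exact (sub_optIter_map hp k _).trans hx

theorem sub_injectiveAt (hp : p ∈ I) (hinj : L.InjectiveAt p) : (L.sub I v).InjectiveAt p :=
  fun _ _ _ h h' =>
    Subtype.ext (hinj _ _ _ ((sub_F_eq_some_iff hp).1 h) ((sub_F_eq_some_iff hp).1 h'))

theorem sub_Finv_map (hp : p ∈ I) (hinj : L.InjectiveAt p) (u : (L.sub I v).V) :
    ((L.sub I v).Finv p u).map Subtype.val = L.Finv p u.1 := by
  refine Option.ext fun x => Option.map_eq_some_iff.trans ?_
  rw [Finv_eq_some_iff hinj]
  constructor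
  · rintro ⟨w, hw, rfl⟩
    exact (sub_F_eq_some_iff hp).1 ((Finv_eq_some_iff (sub_injectiveAt hp hinj)).1 hw)
  · intro hx
    obtain ⟨w, hw, rfl⟩ := exists_sub_F_eq_of_F_eq hp hx
    exact ⟨w, (Finv_eq_some_iff (sub_injectiveAt hp hinj)).2 hw, rfl⟩

theorem sub_connected (v : L.V) : (L.sub I v).Connected := by
  have hroot : ∀ u : (L.sub I v).V, Relation.ReflTransGen (L.sub I v).Step ⟨v, .refl⟩ u := by
    rintro ⟨u, hu⟩
    induction hu with
    | refl => exact .refl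
    | tail hvx hxy ih =>
      obtain ⟨p, hp, hxy | hyx⟩ := hxy
      · exact ih.tail ⟨p, Or.inl ((sub_F_eq_some_iff hp).2 hxy)⟩
      · exact ih.tail ⟨p, Or.inr ((sub_F_eq_some_iff hp).2 hyx)⟩
  have : Std.Symm (L.sub I v).Step := ⟨fun _ _ ⟨p, h⟩ => ⟨p, h.symm⟩⟩
  exact fun a b => (Std.Symm.symm _ _ (hroot a)).trans (hroot b)

theorem sub_wordApply_map {α : List ℕ} (hα : ∀ a ∈ α, a ∈ I) (u : (L.sub I v).V) :
    (wordApply (L.sub I v).F α u).map Subtype.val = wordApply L.F α u.1 := by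
  refine (wordApply_map_of_semiconj (τ := fun a => [a]) (H := L.F) (fun a ha x => ?_) u).trans
    (by rw [List.flatMap_singleton'])
  rw [wordApply_singleton]
  exact sub_F_map (hα a ha) x

theorem sub_wordApply_Finv_map {α : List ℕ} (hα : ∀ a ∈ α, a ∈ I ∧ L.InjectiveAt a)
    (u : (L.sub I v).V) :
    (wordApply (L.sub I v).Finv α u).map Subtype.val = wordApply L.Finv α u.1 := by
  refine (wordApply_map_of_semiconj (τ := fun a => [a]) (H := L.Finv) (fun a ha x => ?_) u).trans
    (by rw [List.flatMap_singleton'])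
  rw [wordApply_singleton]
  exact sub_Finv_map (hα a ha).1 (hα a ha).2 x

variable (hp : p ∈ I) (hq : q ∈ I)
include hp hq

theorem A2at_sub (h : A2at L p q) : A2at (L.sub I v) p q := by
  refine ⟨fun u w huw => ?_, fun u w z huw hwz => ?_⟩
  · rw [sub_F_eq_some_iff hp] at huw
    simpa only [sub_h hq, sub_t hq] using h.1 _ _ huw
  · rw [sub_F_eq_some_iff hp] at huw hwz
    simpa only [sub_h hq] using h.2 _ _ _ huw hwz

theorem A3at_sub (h : A3at L p q) : A3at (L.sub I v) p q := by
  refine ⟨fun u w w' huw huw' hl => ?_, fun u u' w huw hu'w hl => ?_⟩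
  · rw [sub_F_eq_some_iff hp] at huw
    rw [sub_F_eq_some_iff hq] at huw'
    rw [sub_h hq, sub_h hq] at hl
    obtain ⟨hl', W, hW, hW'⟩ := h.1 _ _ _ huw huw' hl
    obtain ⟨z, hz, rfl⟩ := exists_sub_F_eq hq hW
    exact ⟨by simpa only [sub_h hp] using hl', z, hz, (sub_F_eq_some_iff hp).2 hW'⟩
  · rw [sub_F_eq_some_iff hp] at huw
    rw [sub_F_eq_some_iff hq] at hu'w
    rw [sub_h hq, sub_h hq] at hl
    obtain ⟨hl', W, hW, hW'⟩ := h.2 _ _ _ huw hu'w hl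
    obtain ⟨z, hz, rfl⟩ := exists_sub_F_eq_of_F_eq hq hW
    exact ⟨by simpa only [sub_h hp] using hl', z, hz, (sub_F_eq_some_iff hp).2 hW'⟩

theorem A4at_sub (hinjp : L.InjectiveAt p) (hinjq : L.InjectiveAt q) (h : A4at L p q) :
    A4at (L.sub I v) p q := by
  refine ⟨fun u w w' huw huw' hl hl' => ?_, fun u u' w huw hu'w hl hl' => ?_⟩
  · rw [sub_F_eq_some_iff hp] at huw
    rw [sub_F_eq_some_iff hq] at huw'
    rw [sub_h hq, sub_h hq] at hl
    rw [sub_h hp, sub_h hp] at hl'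
    obtain ⟨W, hW, hW'⟩ := h.1 _ _ _ huw huw' hl hl'
    simp only [← wordApply_four] at hW hW' ⊢
    exact Option.exists_eq_some_of_map_eq_some Subtype.val_injective
      ((sub_wordApply_map (by simp [hp, hq]) u).trans hW)
      ((sub_wordApply_map (by simp [hp, hq]) u).trans hW')
  · rw [sub_F_eq_some_iff hp] at huw
    rw [sub_F_eq_some_iff hq] at hu'w
    rw [sub_h hq, sub_h hq] at hl
    rw [sub_h hp, sub_h hp] at hl'
    obtain ⟨W, hW, hW'⟩ := h.2 _ _ _ huw hu'w hl hl'
    simp only [← wordApply_four] at hW hW' ⊢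
    exact Option.exists_eq_some_of_map_eq_some Subtype.val_injective
      ((sub_wordApply_Finv_map (by simp [hp, hq, hinjp, hinjq]) w).trans hW)
      ((sub_wordApply_Finv_map (by simp [hp, hq, hinjp, hinjq]) w).trans hW')

theorem A5at_sub (hinjp : L.InjectiveAt p) (hinjq : L.InjectiveAt q) (h : A5at L p q) :
    A5at (L.sub I v) p q := by
  have lift : ∀ r ∈ I, L.InjectiveAt r →
      ∀ G ∈ ({(L.sub I v).F r, (L.sub I v).Finv r} : Set ((L.sub I v).V → Option (L.sub I v).V)),
      ∃ G' ∈ ({L.F r, L.Finv r} : Set (L.V → Option L.V)),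
        ∀ x, (G x).map Subtype.val = G' x.1 := by
    rintro r hr hinj G (rfl | rfl)
    · exact ⟨L.F r, by simp, sub_F_map hr⟩
    · exact ⟨L.Finv r, by simp, sub_Finv_map hr hinj⟩
  intro Gp hGp Gq hGq x hpx hqx
  obtain ⟨Gp', hGp', hp'⟩ := lift p hp hinjp Gp hGp
  obtain ⟨Gq', hGq', hq'⟩ := lift q hq hinjq Gq hGq
  obtain ⟨W, h₁, h₂⟩ := h Gp' hGp' Gq' hGq' x.1 (by rw [← hp']; exact Option.isSome_map.trans hpx)
    (by rw [← hq']; exact Option.isSome_map.trans hqx)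
  have hbind : ∀ {G H : (L.sub I v).V → Option (L.sub I v).V} {G' H' : L.V → Option L.V},
      (∀ y, (G y).map Subtype.val = G' y.1) → (∀ y, (H y).map Subtype.val = H' y.1) →
      ((G x).bind H).map Subtype.val = (G' x.1).bind H' := by
    intro G H G' H' hG hH
    refine Option.map_bind.trans ?_
    rw [show Option.map Subtype.val ∘ H = fun y => H' y.1 from funext hH, ← hG]
    exact Option.bind_map.symm
  exact Option.exists_eq_some_of_map_eq_some Subtype.val_injective
    ((hbind hp' hq').trans h₁) ((hbind hq' hp').trans h₂)

omit hp hq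

theorem isColored_sub [Finite L.V] (hinj : ∀ p ∈ I, L.InjectiveAt p)
    (hacyc : ∀ p ∈ I, L.AcyclicAt p) (v : L.V) : IsColored (L.sub I v) I := by
  refine ⟨Subtype.finite, fun p hp => sub_F_of_not_mem hp, fun p => ?_, fun p => ?_⟩
  · by_cases hp : p ∈ I
    · exact sub_injectiveAt hp (hinj p hp)
    · intro u _ w h
      simp [sub_F_of_not_mem hp] at h
  · intro u k hk hu
    obtain ⟨k, rfl⟩ := Nat.exists_eq_add_of_lt hk
    by_cases hp : p ∈ I
    · exact hacyc p hp u.1 _ hk (by rw [← sub_optIter_map hp, hu]; rfl)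
    · simp [optIter, sub_F_of_not_mem hp] at hu

theorem isCrystalOn_sub [Finite L.V] (hinj : ∀ p ∈ I, L.InjectiveAt p)
    (hacyc : ∀ p ∈ I, L.AcyclicAt p)
    (hA2 : ∀ p ∈ I, ∀ q ∈ I, p ≠ q → A2at L p q)
    (hA34 : ∀ p ∈ I, ∀ q ∈ I, Neighb p q → A3at L p q ∧ A4at L p q)
    (hA5 : ∀ p ∈ I, ∀ q ∈ I, Far p q → A5at L p q) (v : L.V) :
    IsCrystalOn (L.sub I v) I :=
  ⟨isColored_sub hinj hacyc v, sub_connected v,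
    fun p hp q hq hpq => A2at_sub hp hq (hA2 p hp q hq hpq),
    fun p hp q hq hpq => ⟨A3at_sub hp hq (hA34 p hp q hq hpq).1,
      A4at_sub hp hq (hinj p hp) (hinj q hq) (hA34 p hp q hq hpq).2⟩,
    fun p hp q hq hpq => A5at_sub hp hq (hinj p hp) (hinj q hq) (hA5 p hp q hq hpq)⟩

end PreGraph

theorem mem_Icc_of_mem_Ico {n p : ℕ} (hp : p ∈ Set.Ico 1 n) : p ∈ Set.Icc 1 (2 * n - 1) := by
  simp only [Set.mem_Ico, Set.mem_Icc] at *; omega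

theorem mirror_mem_Icc {n p : ℕ} (hp : p ∈ Set.Ico 1 n) : 2 * n - p ∈ Set.Icc 1 (2 * n - 1) := by
  simp only [Set.mem_Ico, Set.mem_Icc] at *; omega

theorem far_mirror {n p q : ℕ} (hp : p ∈ Set.Ico 1 n) (hq : q ∈ Set.Ico 1 n) :
    Far p (2 * n - q) := by
  simp only [Set.mem_Ico] at *; unfold Far; omega

theorem extract_F_eq_some_iff {K : PreGraph} {chain : ℕ → K.V → Option K.V} {σ : K.V → K.V}
    {p : ℕ} {u w : (extract K chain σ).V} :
    (extract K chain σ).F p u = some w ↔ chain p u.1 = some w.1 := by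
  refine Option.pbind_eq_some_iff.trans ⟨?_, ?_⟩
  · rintro ⟨z, hz, hzw⟩
    split_ifs at hzw with h
    cases hzw
    exact hz
  · exact fun h => ⟨w.1, h, by rw [dif_pos w.2]; rfl⟩

theorem extractB_F_eq_some_iff {K : PreGraph} {n p : ℕ} {σ : K.V → K.V} (hp : p ∈ Set.Ico 1 n)
    {u w : (extractB K n σ).V} :
    (extractB K n σ).F p u = some w ↔ ∃ x, K.F p u.1 = some x ∧ K.F (2 * n - p) x = some w.1 := by
  refine extract_F_eq_some_iff.trans ?_
  rw [chainB, if_pos ⟨hp.1, hp.2.le⟩, if_neg hp.2.ne, Option.bind_eq_some_iff]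

section SymmetricExtract

open PreGraph

variable {K : PreGraph} {n : ℕ} {σ : K.V → K.V} (hK : IsACrystal (2 * n - 1) K)
  (hσ : ∀ (i : ℕ) (u v : K.V), K.F i u = some v ↔ K.F (2 * n - i) (σ u) = some (σ v))
  {p q : ℕ}

include hσ in
theorem F_of_mirror_F (hp : p ≤ 2 * n) {x y : K.V} (h : K.F (2 * n - p) x = some y) :
    K.F p (σ x) = some (σ y) := by
  simpa only [Nat.sub_sub_self hp] using (hσ _ x y).1 h

include hK

theorem exists_mirror_F_F_of_extractB_F_eq (hp : p ∈ Set.Ico 1 n) {u w : (extractB K n σ).V}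
    (h : (extractB K n σ).F p u = some w) :
    ∃ a, K.F (2 * n - p) u.1 = some a ∧ K.F p a = some w.1 := by
  obtain ⟨x, hx, hxw⟩ := (extractB_F_eq_some_iff hp).1 h
  exact hK.exists_F_F_swap (mem_Icc_of_mem_Ico hp) (mirror_mem_Icc hp) (far_mirror hp hp) hx hxw

theorem h_eq_of_mirror_F (hp : p ∈ Set.Ico 1 n) (hq : q ∈ Set.Ico 1 n) {x y : K.V}
    (h : K.F (2 * n - p) x = some y) : K.h q y = K.h q x :=
  hK.h_eq_of_far (mirror_mem_Icc hp) (mem_Icc_of_mem_Ico hq) (far_mirror hq hp).symm h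

theorem t_eq_of_mirror_F (hp : p ∈ Set.Ico 1 n) (hq : q ∈ Set.Ico 1 n) {x y : K.V}
    (h : K.F (2 * n - p) x = some y) : K.t q y = K.t q x :=
  hK.t_eq_of_far (mirror_mem_Icc hp) (mem_Icc_of_mem_Ico hq) (far_mirror hq hp).symm h

theorem extractB_h_step (hp : p ∈ Set.Ico 1 n) {u w : (extractB K n σ).V}
    (h : (extractB K n σ).F p u = some w) : K.h p u.1 = K.h p w.1 + 1 := by
  obtain ⟨x, hx, hxw⟩ := (extractB_F_eq_some_iff hp).1 h
  rw [h_eq_succ_of_F hK.1 hx, h_eq_of_mirror_F hK hp hp hxw]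

theorem extractB_t_step (hp : p ∈ Set.Ico 1 n) {u w : (extractB K n σ).V}
    (h : (extractB K n σ).F p u = some w) : K.t p w.1 = K.t p u.1 + 1 := by
  obtain ⟨x, hx, hxw⟩ := (extractB_F_eq_some_iff hp).1 h
  rw [t_eq_of_mirror_F hK hp hp hxw, t_eq_succ_of_F hK.1 hx]

theorem extractB_injectiveAt (hp : p ∈ Set.Ico 1 n) : (extractB K n σ).InjectiveAt p := by
  intro u u' w h h'
  obtain ⟨x, hx, hxw⟩ := (extractB_F_eq_some_iff hp).1 h
  obtain ⟨x', hx', hx'w⟩ := (extractB_F_eq_some_iff hp).1 h'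
  obtain rfl := hK.1.2.2.1 _ _ _ _ hxw hx'w
  exact Subtype.ext (hK.1.2.2.1 _ _ _ _ hx hx')

theorem extractB_acyclicAt (hp : p ∈ Set.Ico 1 n) : (extractB K n σ).AcyclicAt p := by
  intro u k hk h
  have := eq_add_of_optIter_eq_some (fun u : (extractB K n σ).V => K.h p u.1)
    (fun _ _ => extractB_h_step hK hp) h
  omega

include hσ

theorem exists_mirror_F_fixed (hp : p ∈ Set.Ico 1 n) {u x : K.V} (hu : σ u = u)
    (hx : K.F p u = some x) : ∃ y, K.F (2 * n - p) x = some y ∧ σ y = y := by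
  have hσx : K.F (2 * n - p) u = some (σ x) := by simpa only [hu] using (hσ p u x).1 hx
  obtain ⟨y, hxy, hσxy⟩ := hK.diamond_F (mem_Icc_of_mem_Ico hp) (mirror_mem_Icc hp)
    (far_mirror hp hp) u x (σ x) hx hσx
  have := F_of_mirror_F hσ (by simp only [Set.mem_Ico] at hp; omega) hxy
  exact ⟨y, hxy, Option.some.inj (this.symm.trans hσxy)⟩

theorem exists_fixed_F_F_eq (hp : p ∈ Set.Ico 1 n) {u x : K.V} (hu : σ u = u)
    (hx : K.F p x = some u) :
    ∃ w y, σ w = w ∧ K.F p w = some y ∧ K.F (2 * n - p) y = some u := by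
  have hinj := hK.1.2.2.1
  have hσx : K.F (2 * n - p) (σ x) = some u := by simpa only [hu] using (hσ p x u).1 hx
  obtain ⟨w, hwx, hwσx⟩ := hK.diamond_Finv (mem_Icc_of_mem_Ico hp) (mirror_mem_Icc hp)
    (far_mirror hp hp) u x (σ x) ((Finv_eq_some_iff (hinj _)).2 hx)
    ((Finv_eq_some_iff (hinj _)).2 hσx)
  rw [Finv_eq_some_iff (hinj _)] at hwx hwσx
  have := F_of_mirror_F hσ (by simp only [Set.mem_Ico] at hp; omega) hwx
  exact ⟨w, σ x, hinj _ _ _ _ this hwσx, hwσx, hσx⟩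

theorem isSome_extractB_F_iff (hp : p ∈ Set.Ico 1 n) (u : (extractB K n σ).V) :
    ((extractB K n σ).F p u).isSome ↔ (K.F p u.1).isSome := by
  constructor
  · intro h
    obtain ⟨w, hw⟩ := Option.isSome_iff_exists.mp h
    obtain ⟨x, hx, -⟩ := (extractB_F_eq_some_iff hp).1 hw
    simp [hx]
  · intro h
    obtain ⟨x, hx⟩ := Option.isSome_iff_exists.mp h
    obtain ⟨y, hxy, hy⟩ := exists_mirror_F_fixed hK hσ hp u.2 hx
    rw [(extractB_F_eq_some_iff hp (w := ⟨y, hy⟩)).2 ⟨x, hx, hxy⟩]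
    rfl

theorem extractB_h (hp : p ∈ Set.Ico 1 n) (u : (extractB K n σ).V) :
    (extractB K n σ).h p u = K.h p u.1 :=
  h_eq_of_step (fun u : (extractB K n σ).V => K.h p u.1)
    (fun u => (isSome_extractB_F_iff hK hσ hp u).trans (isSome_F_iff_h_pos hK.1))
    (fun _ _ => extractB_h_step hK hp) u

theorem extractB_t (hp : p ∈ Set.Ico 1 n) (u : (extractB K n σ).V) :
    (extractB K n σ).t p u = K.t p u.1 := by
  refine t_eq_of_step (fun u : (extractB K n σ).V => K.t p u.1) (fun u => ⟨?_, fun ht => ?_⟩)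
    (fun _ _ => extractB_t_step hK hp) u
  · rintro ⟨w, hw⟩
    rw [extractB_t_step hK hp hw]
    omega
  · obtain ⟨x, hx⟩ := (exists_F_eq_iff_t_pos hK.1).2 ht
    obtain ⟨w, y, hw, hwy, hyu⟩ := exists_fixed_F_F_eq hK hσ hp u.2 hx
    exact ⟨⟨w, hw⟩, (extractB_F_eq_some_iff hp).2 ⟨y, hwy, hyu⟩⟩

theorem extractB_F_map (hp : p ∈ Set.Ico 1 n) (u : (extractB K n σ).V) :
    ((extractB K n σ).F p u).map Subtype.val = wordApply K.F [p, 2 * n - p] u.1 := by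
  refine Option.ext fun y => Option.map_eq_some_iff.trans ?_
  simp only [wordApply_pair, Option.bind_eq_some_iff]
  constructor
  · rintro ⟨w, hw, rfl⟩
    exact (extractB_F_eq_some_iff hp).1 hw
  · rintro ⟨x, hx, hxy⟩
    obtain ⟨y', hxy', hy'⟩ := exists_mirror_F_fixed hK hσ hp u.2 hx
    obtain rfl := Option.some.inj (hxy'.symm.trans hxy)
    exact ⟨⟨y', hy'⟩, (extractB_F_eq_some_iff hp).2 ⟨x, hx, hxy⟩, rfl⟩

-- The inverse undoes the `p`-edge first, which is legitimate since `p` and `2 * n - p` commute.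
theorem extractB_Finv_map (hp : p ∈ Set.Ico 1 n) (u : (extractB K n σ).V) :
    ((extractB K n σ).Finv p u).map Subtype.val = wordApply K.Finv [p, 2 * n - p] u.1 := by
  have hinj := hK.1.2.2.1
  refine Option.ext fun W => Option.map_eq_some_iff.trans ?_
  simp only [wordApply_pair, Option.bind_eq_some_iff, Finv_eq_some_iff (hinj _)]
  constructor
  · rintro ⟨w, hw, rfl⟩
    obtain ⟨a, ha, hau⟩ := exists_mirror_F_F_of_extractB_F_eq hK hp
      ((Finv_eq_some_iff (extractB_injectiveAt hK hp)).1 hw)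
    exact ⟨a, hau, ha⟩
  · rintro ⟨y, hyu, hWy⟩
    obtain ⟨w, x, hw, hwx, hxu⟩ := exists_fixed_F_F_eq hK hσ hp u.2 hyu
    obtain ⟨x', hWx', hx'u⟩ := hK.exists_F_F_swap (mirror_mem_Icc hp) (mem_Icc_of_mem_Ico hp)
      (far_mirror hp hp).symm hWy hyu
    obtain rfl := hinj _ _ _ _ hx'u hxu
    obtain rfl := hinj _ _ _ _ hWx' hwx
    exact ⟨⟨W, hw⟩, (Finv_eq_some_iff (extractB_injectiveAt hK hp)).2
      ((extractB_F_eq_some_iff hp).2 ⟨x', hWx', hx'u⟩), rfl⟩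

theorem extractB_exists_wordApply_eq {α₁ α₂ : List ℕ} (h₁ : ∀ a ∈ α₁, a ∈ Set.Ico 1 n)
    (h₂ : ∀ a ∈ α₂, a ∈ Set.Ico 1 n) (u : (extractB K n σ).V) {z : K.V}
    (hz₁ : wordApply K.F α₁ u.1 = some z) (hz₂ : wordApply K.F α₂ u.1 = some z) :
    ∃ w, wordApply (extractB K n σ).F α₁ u = some w ∧
      wordApply (extractB K n σ).F α₂ u = some w :=
  exists_wordApply_eq_of_doubling
    (fun _ ha _ hb => hK.diamond_F (mem_Icc_of_mem_Ico ha) (mirror_mem_Icc hb) (far_mirror ha hb))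
    (fun a _ x y => (hσ a x y).1) (fun _ ha => extractB_F_map hK hσ ha) h₁ h₂ u hz₁ hz₂

theorem extractB_exists_wordApply_Finv_eq {α₁ α₂ : List ℕ} (h₁ : ∀ a ∈ α₁, a ∈ Set.Ico 1 n)
    (h₂ : ∀ a ∈ α₂, a ∈ Set.Ico 1 n) (u : (extractB K n σ).V) {z : K.V}
    (hz₁ : wordApply K.Finv α₁ u.1 = some z) (hz₂ : wordApply K.Finv α₂ u.1 = some z) :
    ∃ w, wordApply (extractB K n σ).Finv α₁ u = some w ∧
      wordApply (extractB K n σ).Finv α₂ u = some w := by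
  have hinj := hK.1.2.2.1
  refine exists_wordApply_eq_of_doubling
    (fun _ ha _ hb =>
      hK.diamond_Finv (mem_Icc_of_mem_Ico ha) (mirror_mem_Icc hb) (far_mirror ha hb))
    (fun a _ x y h => ?_) (fun _ ha => extractB_Finv_map hK hσ ha) h₁ h₂ u hz₁ hz₂
  rw [Finv_eq_some_iff (hinj _)] at h ⊢
  exact (hσ a y x).1 h

theorem extractB_A2at (hp : p ∈ Set.Ico 1 n) (hq : q ∈ Set.Ico 1 n) (hpq : p ≠ q) :
    A2at (extractB K n σ) p q := by
  have hA2 := hK.2.2.1 p (mem_Icc_of_mem_Ico hp) q (mem_Icc_of_mem_Ico hq) hpq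
  refine ⟨fun u w huw => ?_, fun u w z huw hwz => ?_⟩
  · obtain ⟨x, hx, hxw⟩ := (extractB_F_eq_some_iff hp).1 huw
    rw [extractB_h hK hσ hq, extractB_h hK hσ hq, extractB_t hK hσ hq, extractB_t hK hσ hq,
      h_eq_of_mirror_F hK hp hq hxw, t_eq_of_mirror_F hK hp hq hxw]
    exact hA2.1 _ _ hx
  · obtain ⟨x₁, hx₁, hx₁w⟩ := (extractB_F_eq_some_iff hp).1 huw
    obtain ⟨x₂, hx₂, hx₂z⟩ := (extractB_F_eq_some_iff hp).1 hwz
    obtain ⟨y, hx₁y, hyx₂⟩ := hK.exists_F_F_swap (mirror_mem_Icc hp) (mem_Icc_of_mem_Ico hp)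
      (far_mirror hp hp).symm hx₁w hx₂
    rw [extractB_h hK hσ hq, extractB_h hK hσ hq, extractB_h hK hσ hq,
      h_eq_of_mirror_F hK hp hq hx₁w, h_eq_of_mirror_F hK hp hq hx₂z,
      h_eq_of_mirror_F hK hp hq hyx₂]
    exact hA2.2 _ _ _ hx₁ hx₁y

theorem extractB_A3at (hp : p ∈ Set.Ico 1 n) (hq : q ∈ Set.Ico 1 n) (hpq : Neighb p q) :
    A3at (extractB K n σ) p q := by
  have hA3 := (hK.2.2.2.1 p (mem_Icc_of_mem_Ico hp) q (mem_Icc_of_mem_Ico hq) hpq).1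
  have hinj := hK.1.2.2.1
  have hpq' : ∀ a ∈ [p, q], a ∈ Set.Ico 1 n := by simp [hp, hq, -Set.mem_Ico]
  have hqp' : ∀ a ∈ [q, p], a ∈ Set.Ico 1 n := by simp [hp, hq, -Set.mem_Ico]
  refine ⟨fun u w w' huw huw' hl => ?_, fun u u' w huw hu'w hl => ?_⟩
  · obtain ⟨x, hx, hxw⟩ := (extractB_F_eq_some_iff hp).1 huw
    obtain ⟨y, hy, hyw'⟩ := (extractB_F_eq_some_iff hq).1 huw'
    rw [extractB_h hK hσ hq, extractB_h hK hσ hq, h_eq_of_mirror_F hK hp hq hxw] at hl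
    obtain ⟨hl', z, hxz, hyz⟩ := hA3.1 _ _ _ hx hy hl
    obtain ⟨W, hW, hW'⟩ := extractB_exists_wordApply_eq hK hσ hpq' hqp' u (z := z)
      (by simp [wordApply_pair, hx, hxz]) (by simp [wordApply_pair, hy, hyz])
    rw [wordApply_pair, huw] at hW
    rw [wordApply_pair, huw'] at hW'
    refine ⟨?_, W, hW, hW'⟩
    rw [extractB_h hK hσ hp, extractB_h hK hσ hp, h_eq_of_mirror_F hK hq hp hyw']
    exact hl'
  · obtain ⟨a, hua, haw⟩ := exists_mirror_F_F_of_extractB_F_eq hK hp huw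
    obtain ⟨b, hu'b, hbw⟩ := exists_mirror_F_F_of_extractB_F_eq hK hq hu'w
    rw [extractB_h hK hσ hq, extractB_h hK hσ hq, ← h_eq_of_mirror_F hK hp hq hua] at hl
    obtain ⟨hl', z, hza, hzb⟩ := hA3.2 _ _ _ haw hbw hl
    simp only [← Finv_eq_some_iff (hinj _)] at haw hbw hza hzb
    obtain ⟨W, hW, hW'⟩ := extractB_exists_wordApply_Finv_eq hK hσ hpq' hqp' w (z := z)
      (by simp [wordApply_pair, haw, hza]) (by simp [wordApply_pair, hbw, hzb])
    rw [wordApply_pair, (Finv_eq_some_iff (extractB_injectiveAt hK hp)).2 huw] at hW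
    rw [wordApply_pair, (Finv_eq_some_iff (extractB_injectiveAt hK hq)).2 hu'w] at hW'
    refine ⟨?_, W, (Finv_eq_some_iff (extractB_injectiveAt hK hq)).1 hW,
      (Finv_eq_some_iff (extractB_injectiveAt hK hp)).1 hW'⟩
    rw [extractB_h hK hσ hp, extractB_h hK hσ hp, ← h_eq_of_mirror_F hK hq hp hu'b]
    exact hl'

theorem extractB_A4at (hp : p ∈ Set.Ico 1 n) (hq : q ∈ Set.Ico 1 n) (hpq : Neighb p q) :
    A4at (extractB K n σ) p q := by
  have hA4 := (hK.2.2.2.1 p (mem_Icc_of_mem_Ico hp) q (mem_Icc_of_mem_Ico hq) hpq).2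
  have hinj := hK.1.2.2.1
  have hpqqp : ∀ a ∈ [p, q, q, p], a ∈ Set.Ico 1 n := by simp [hp, hq, -Set.mem_Ico]
  have hqppq : ∀ a ∈ [q, p, p, q], a ∈ Set.Ico 1 n := by simp [hp, hq, -Set.mem_Ico]
  refine ⟨fun u w w' huw huw' hl hl' => ?_, fun u u' w huw hu'w hl hl' => ?_⟩
  · obtain ⟨x, hx, hxw⟩ := (extractB_F_eq_some_iff hp).1 huw
    obtain ⟨y, hy, hyw'⟩ := (extractB_F_eq_some_iff hq).1 huw'
    rw [extractB_h hK hσ hq, extractB_h hK hσ hq, h_eq_of_mirror_F hK hp hq hxw] at hl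
    rw [extractB_h hK hσ hp, extractB_h hK hσ hp, h_eq_of_mirror_F hK hq hp hyw'] at hl'
    obtain ⟨z, hz, hz'⟩ := hA4.1 _ _ _ hx hy hl hl'
    rw [← wordApply_four] at hz hz' ⊢
    rw [← wordApply_four]
    exact extractB_exists_wordApply_eq hK hσ hpqqp hqppq u hz hz'
  · obtain ⟨a, hua, haw⟩ := exists_mirror_F_F_of_extractB_F_eq hK hp huw
    obtain ⟨b, hu'b, hbw⟩ := exists_mirror_F_F_of_extractB_F_eq hK hq hu'w
    rw [extractB_h hK hσ hq, extractB_h hK hσ hq, ← h_eq_of_mirror_F hK hp hq hua] at hl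
    rw [extractB_h hK hσ hp, extractB_h hK hσ hp, ← h_eq_of_mirror_F hK hq hp hu'b] at hl'
    obtain ⟨z, hz, hz'⟩ := hA4.2 _ _ _ haw hbw hl hl'
    rw [← wordApply_four] at hz hz' ⊢
    rw [← wordApply_four]
    exact extractB_exists_wordApply_Finv_eq hK hσ hpqqp hqppq w hz hz'

end SymmetricExtract

theorem not_far_of_mem_pair {i j p q : ℕ} (hij : Neighb i j) (hp : p ∈ ({i, j} : Set ℕ))
    (hq : q ∈ ({i, j} : Set ℕ)) : ¬ Far p q := by
  unfold Neighb at hij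
  unfold Far
  rcases hp with rfl | rfl <;> rcases hq with rfl | rfl <;> omega

theorem extract_neighboring_components_are_A2_general
    (n : ℕ) (K : PreGraph) (hK : IsACrystal (2 * n - 1) K)
    (σ : K.V → K.V)
    (hσ : ∀ (i : ℕ) (u v : K.V), K.F i u = some v ↔ K.F (2 * n - i) (σ u) = some (σ v))
    (i j : ℕ) (hi1 : 1 ≤ i) (hin : i < n) (hj1 : 1 ≤ j) (hjn : j < n)
    (hij : Neighb i j) :
    ∀ v : (extractB K n σ).V,
      IsCrystalOn ((extractB K n σ).sub {i, j} v) {i, j} := by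
  have hI : ∀ p ∈ ({i, j} : Set ℕ), p ∈ Set.Ico 1 n := by
    rintro p (rfl | rfl)
    exacts [⟨hi1, hin⟩, ⟨hj1, hjn⟩]
  have : Finite (extractB K n σ).V := @Subtype.finite _ hK.1.1 _
  exact PreGraph.isCrystalOn_sub
    (fun p hp => extractB_injectiveAt hK (hI p hp))
    (fun p hp => extractB_acyclicAt hK (hI p hp))
    (fun p hp q hq hpq => extractB_A2at hK hσ (hI p hp) (hI q hq) hpq)
    (fun p hp q hq hpq => ⟨extractB_A3at hK hσ (hI p hp) (hI q hq) hpq,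
      extractB_A4at hK hσ (hI p hp) (hI q hq) hpq⟩)
    (fun p hp q hq hpq => (not_far_of_mem_pair hij hp hq hpq).elim)

/-- for colors `i, j < n` with `|i - j| = 1`, every connected component of
the 2-colored subgraph of the symmetric extract `B` with colors `ibar, jbar` is an
`A_2`-crystal. -/
theorem extract_neighboring_components_are_A2
    (n : ℕ) (hn : 2 ≤ n) (K : PreGraph) (hK : IsACrystal (2 * n - 1) K)
    (s : K.V) (hs : IsSource K s)
    (c : ℕ → ℕ) (hc : ∀ i, 1 ≤ i → i ≤ 2 * n - 1 → K.h i s = c i)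
    (hsym : ∀ i, 1 ≤ i → i ≤ 2 * n - 1 → c i = c (2 * n - i))
    (σ : K.V → K.V) (hσb : Function.Bijective σ)
    (hσ : ∀ (i : ℕ) (u v : K.V), K.F i u = some v ↔ K.F (2 * n - i) (σ u) = some (σ v))
    (i j : ℕ) (hi1 : 1 ≤ i) (hin : i < n) (hj1 : 1 ≤ j) (hjn : j < n)
    (hij : Neighb i j) :
    ∀ v : (extractB K n σ).V,
      IsCrystalOn ((extractB K n σ).sub {i, j} v) {i, j} :=
  extract_neighboring_components_are_A2_general n K hK σ hσ i j hi1 hin hj1 hjn hij
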